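/- Let 𝔎 = (K, R, ⋆, {0}) be a frame whose identity set is the singleton {0}. Then 𝔎 is a KR-frame if and only if Cm(𝔎) is a dense symmetric relation algebra. -/

import Mathlib

/-- Composition in the complex algebra of a frame. -/
def scomp {K : Type*} (R : K → K → K → Prop) (X Y : Set K) : Set K :=
  {z | ∃ x ∈ X, ∃ y ∈ Y, R x y z}

/-- Converse in the complex algebra of a frame. -/
def sconv {K : Type*} (s : K → K) (X : Set K) : Set K := s '' X

/-- The complex algebra of the frame `(K, R, ⋆, I)` is a relation algebra. -/
def CmRA {K : Type*} (R : K → K → K → Prop) (s : K → K) (I : Set K) : Prop :=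
  (∀ X Y Z : Set K, scomp R (X ∪ Y) Z = scomp R X Z ∪ scomp R Y Z) ∧
  (∀ X : Set K, scomp R X I = X) ∧
  (∀ X : Set K, sconv s (sconv s X) = X) ∧
  (∀ X Y : Set K, sconv s (X ∪ Y) = sconv s X ∪ sconv s Y) ∧
  (∀ X Y : Set K, sconv s (scomp R X Y) = scomp R (sconv s Y) (sconv s X)) ∧
  (∀ X Y : Set K, scomp R (sconv s X) (scomp R X Y)ᶜ ⊆ Yᶜ) ∧
  (∀ X Y Z : Set K, scomp R X (scomp R Y Z) = scomp R (scomp R X Y) Z)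

/-- `(K, R, ⋆, {z0})` is a CR-frame: postulates p1–p5 of Meyer and Routley. -/
def CRFrame {K : Type*} (R : K → K → K → Prop) (s : K → K) (z0 : K) : Prop :=
  (∀ a b : K, R z0 a b ↔ a = b) ∧
  (∀ a b c d : K, (∃ x, R a b x ∧ R x c d) ↔ (∃ y, R a c y ∧ R y b d)) ∧
  (∀ a : K, R a a a) ∧
  (∀ a : K, s (s a) = a) ∧
  (∀ a b c : K, R a b c ↔ R a (s c) (s b))

/-- `(K, R, ⋆, {z0})` is a KR-frame: a CR-frame in which `⋆` is the identity. -/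
def KRFrame {K : Type*} (R : K → K → K → Prop) (s : K → K) (z0 : K) : Prop :=
  CRFrame R s z0 ∧ ∀ a : K, s a = a

/-!
Both sides force `⋆ = id`, and then every postulate of a KR-frame and every law of a dense
symmetric relation algebra on `Cm(𝔎)` is equivalent to a first-order condition on `R`, obtained
by testing the set-level law on singletons. The two lists of conditions match once `R` is known
to be commutative in its first two arguments; in a KR-frame this follows from p1 and p2 with
`a = 0`, and in `Cm(𝔎)` from `(X;Y)⌣ = Y⌣;X⌣` with a trivial converse. Under commutativity, p2
is associativity of `R`, p1 says `0` is a right identity, and p5 is the cycle law.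
-/

section

variable {K : Type*} {R : K → K → K → Prop}

theorem mem_scomp {X Y : Set K} {z : K} :
    z ∈ scomp R X Y ↔ ∃ x ∈ X, ∃ y ∈ Y, R x y z :=
  Iff.rfl

@[simp]
theorem mem_scomp_singleton {a b c : K} : c ∈ scomp R {a} {b} ↔ R a b c := by
  simp [mem_scomp]

theorem scomp_union_left (X Y Z : Set K) :
    scomp R (X ∪ Y) Z = scomp R X Z ∪ scomp R Y Z := by
  ext z
  simp only [mem_scomp, Set.mem_union, or_and_right, exists_or]

@[simp]
theorem sconv_id (X : Set K) : sconv id X = X :=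
  Set.image_id X

theorem forall_sconv_eq_self_iff {s : K → K} : (∀ X, sconv s X = X) ↔ s = id := by
  refine ⟨fun h => funext fun a => ?_, fun h X => h ▸ sconv_id X⟩
  simpa [sconv] using h {a}

theorem forall_subset_scomp_self_iff : (∀ X : Set K, X ⊆ scomp R X X) ↔ ∀ a, R a a a :=
  ⟨fun h a => mem_scomp_singleton.1 (h {a} rfl), fun h _ x hx => ⟨x, hx, x, hx, h x⟩⟩

theorem forall_scomp_singleton_eq_self_iff {e : K} :
    (∀ X, scomp R X {e} = X) ↔ ∀ a b, R a e b ↔ a = b := by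
  refine ⟨fun h a b => ?_, fun h X => ?_⟩
  · simpa [eq_comm] using Set.ext_iff.1 (h {a}) b
  · ext z
    simp [mem_scomp, h]

theorem forall_scomp_comm_iff :
    (∀ X Y, scomp R X Y = scomp R Y X) ↔ ∀ a b c, R a b c → R b a c := by
  refine ⟨fun h a b c => ?_, fun h X Y => ?_⟩
  · simpa using (Set.ext_iff.1 (h {b} {a}) c).2
  · ext z
    constructor <;>
    · rintro ⟨x, hx, y, hy, hxy⟩
      exact ⟨y, hy, x, hx, h x y z hxy⟩

theorem forall_scomp_assoc_iff :
    (∀ X Y Z, scomp R X (scomp R Y Z) = scomp R (scomp R X Y) Z) ↔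
      ∀ a b c d, (∃ x, R b c x ∧ R a x d) ↔ ∃ y, R a b y ∧ R y c d := by
  refine ⟨fun h a b c d => ?_, fun h X Y Z => ?_⟩
  · simpa [mem_scomp] using Set.ext_iff.1 (h {a} {b} {c}) d
  · ext d
    constructor
    · rintro ⟨a, ha, x, ⟨b, hb, c, hc, hbc⟩, hax⟩
      obtain ⟨y, hab, hyc⟩ := (h a b c d).1 ⟨x, hbc, hax⟩
      exact ⟨y, ⟨a, ha, b, hb, hab⟩, c, hc, hyc⟩
    · rintro ⟨y, ⟨a, ha, b, hb, hab⟩, c, hc, hyc⟩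
      obtain ⟨x, hbc, hax⟩ := (h a b c d).2 ⟨y, hab, hyc⟩
      exact ⟨a, ha, x, ⟨b, hb, c, hc, hbc⟩, hax⟩

theorem forall_scomp_sconv_compl_subset_iff {s : K → K} :
    (∀ X Y, scomp R (sconv s X) (scomp R X Y)ᶜ ⊆ Yᶜ) ↔ ∀ a b c, R (s a) b c → R a c b := by
  refine ⟨fun h a b c habc => ?_, fun h X Y => ?_⟩
  · by_contra hacb
    exact h {a} {c} ⟨s a, Set.mem_image_of_mem s rfl, b, mem_scomp_singleton.not.2 hacb, habc⟩ rfl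
  · rintro z ⟨_, ⟨x, hx, rfl⟩, w, hw, hxwz⟩ hz
    exact hw ⟨x, hx, z, hz, h x w z hxwz⟩

/-- Pasch's postulate is p2 of a CR-frame. -/
theorem pasch_iff_assoc_of_comm (hcomm : ∀ a b c, R a b c → R b a c) :
    (∀ a b c d, (∃ x, R a b x ∧ R x c d) ↔ ∃ y, R a c y ∧ R y b d) ↔
      ∀ a b c d, (∃ x, R b c x ∧ R a x d) ↔ ∃ y, R a b y ∧ R y c d := by
  have hcomm' (a b c) : R a b c ↔ R b a c := ⟨hcomm a b c, hcomm b a c⟩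
  refine ⟨fun h a b c d => ?_, fun h a b c d => ?_⟩
  · simpa only [hcomm' _ a d, hcomm' a b] using h b c a d
  · have hacbd := h a c b d
    simp only [hcomm' c b] at hacbd
    exact (h a b c d).symm.trans hacbd

theorem left_unit_iff_right_unit_of_comm (hcomm : ∀ a b c, R a b c → R b a c) {e : K} :
    (∀ a b, R e a b ↔ a = b) ↔ ∀ a b, R a e b ↔ a = b :=
  ⟨fun h a b => ⟨fun hab => (h a b).1 (hcomm a e b hab), fun hab => hcomm e a b ((h a b).2 hab)⟩,
    fun h a b => ⟨fun hab => (h a b).1 (hcomm e a b hab), fun hab => hcomm a e b ((h a b).2 hab)⟩⟩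

theorem rel_comm_of_crFrame {e : K} (h : CRFrame R id e) (a b c : K) : R a b c → R b a c := by
  obtain ⟨p1, p2, -⟩ := h
  intro habc
  obtain ⟨y, hby, hyac⟩ := (p2 e a b c).1 ⟨a, (p1 a a).2 rfl, habc⟩
  rwa [(p1 b y).1 hby]

theorem cmRA_of_crFrame {e : K} (h : CRFrame R id e) : CmRA R id {e} := by
  have hcomm := rel_comm_of_crFrame h
  obtain ⟨p1, p2, -, -, p5⟩ := h
  refine ⟨scomp_union_left, ?_, by simp, by simp, ?_, ?_, ?_⟩
  · exact forall_scomp_singleton_eq_self_iff.2 ((left_unit_iff_right_unit_of_comm hcomm).1 p1)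
  · simpa using forall_scomp_comm_iff.2 hcomm
  · exact forall_scomp_sconv_compl_subset_iff.2 fun a b c => (p5 a b c).1
  · exact forall_scomp_assoc_iff.2 ((pasch_iff_assoc_of_comm hcomm).1 p2)

theorem crFrame_of_cmRA {e : K} (h : CmRA R id {e}) (hdense : ∀ a, R a a a) :
    CRFrame R id e := by
  obtain ⟨-, hid, -, -, hconv, hcycle, hassoc⟩ := h
  have hcomm := forall_scomp_comm_iff.1 (by simpa using hconv)
  have hcycle := forall_scomp_sconv_compl_subset_iff.1 hcycle
  refine ⟨(left_unit_iff_right_unit_of_comm hcomm).2 (forall_scomp_singleton_eq_self_iff.1 hid),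
    (pasch_iff_assoc_of_comm hcomm).2 (forall_scomp_assoc_iff.1 hassoc), hdense,
    fun _ => rfl, fun a b c => ⟨hcycle a b c, hcycle a c b⟩⟩

end

/-- Theorem thm8a(ii): a frame with identity set `{z0}` is a KR-frame iff
its complex algebra is a dense symmetric relation algebra. -/
theorem krframe_iff_dense_symm_RA {K : Type*} (R : K → K → K → Prop)
    (s : K → K) (z0 : K) :
    KRFrame R s z0 ↔
      (CmRA R s ({z0} : Set K) ∧
        (∀ X : Set K, X ⊆ scomp R X X) ∧
        (∀ X : Set K, sconv s X = X)) := by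
  constructor
  · rintro ⟨hK, hs⟩
    obtain rfl : s = id := funext hs
    have hdense : ∀ a, R a a a := hK.2.2.1
    exact ⟨cmRA_of_crFrame hK, forall_subset_scomp_self_iff.2 hdense, sconv_id⟩
  · rintro ⟨hRA, hdense, hsymm⟩
    obtain rfl : s = id := forall_sconv_eq_self_iff.1 hsymm
    exact ⟨crFrame_of_cmRA hRA (forall_subset_scomp_self_iff.1 hdense), fun _ => rfl⟩
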